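/- For every non-identity n-qubit Pauli matrix P, every entry of the channel representation of R(P) belongs to the set {0, 1, 1/√2, −1/√2}. -/

import Mathlib

open Matrix Complex

/-- Length-`n` vectors over `𝔽₂`, indexing computational basis states of `n` qubits. -/
abbrev QVec (n : ℕ) := Fin n → ZMod 2

/-- Integer (here: natural number) dot product of two 0/1 vectors. -/
def dotN {n : ℕ} (a b : QVec n) : ℕ := ∑ i, (a i).val * (b i).val

/-- The `n`-qubit Pauli matrix `P_{a,b}`. -/
noncomputable def Pauli {n : ℕ} (a b : QVec n) : Matrix (QVec n) (QVec n) ℂ :=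
  fun x y => if x = y + a then Complex.I ^ dotN a b * (-1 : ℂ) ^ dotN b y else 0

/-- A `2^n × 2^n` unitary is Clifford if it maps every Pauli matrix to a
Pauli matrix up to a sign `±1`, under conjugation. -/
def IsClifford {n : ℕ} (C : Matrix (QVec n) (QVec n) ℂ) : Prop :=
  C ∈ Matrix.unitaryGroup (QVec n) ℂ ∧
    ∀ a b : QVec n, ∃ a' b' : QVec n, ∃ ε : ℂ, (ε = 1 ∨ ε = -1) ∧
      C * Pauli a b * Cᴴ = ε • Pauli a' b'

/-- The channel representation `Û` of a `2^n × 2^n` matrix `U`: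
rows/columns indexed by Pauli matrices, `Û_{rs} = (1/2^n) Tr(P_r U P_s U†)`. -/
noncomputable def chan {n : ℕ} (U : Matrix (QVec n) (QVec n) ℂ) :
    Matrix (QVec n × QVec n) (QVec n × QVec n) ℂ :=
  fun r s => ((1 : ℂ) / 2 ^ n) * Matrix.trace (Pauli r.1 r.2 * U * Pauli s.1 s.2 * Uᴴ)

/-- The gate `T ⊗ I_{2^{n-1}}`, where `T = diag(1, e^{iπ/4})` acts on the first qubit. -/
noncomputable def Tgate (n : ℕ) : Matrix (QVec n) (QVec n) ℂ :=
  Matrix.diagonal fun x =>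
    if h : 0 < n then (if x ⟨0, h⟩ = 1 then Complex.exp (Complex.I * Real.pi / 4) else 1) else 1

/-- The Clifford+T group `𝒥ₙᵀ`: the subgroup of the unitary group generated by the
Clifford unitaries together with `T ⊗ I_{2^{n-1}}`. -/
noncomputable def CliffordTGroup (n : ℕ) : Subgroup (Matrix.unitaryGroup (QVec n) ℂ) :=
  Subgroup.closure
    {u | IsClifford (u : Matrix (QVec n) (QVec n) ℂ) ∨ (u : Matrix (QVec n) (QVec n) ℂ) = Tgate n}

/-- `R(P) = ((1+e^{iπ/4})/2) I + ((1−e^{iπ/4})/2) P`. -/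
noncomputable def Rgate {n : ℕ} (P : Matrix (QVec n) (QVec n) ℂ) : Matrix (QVec n) (QVec n) ℂ :=
  ((1 + Complex.exp (Complex.I * Real.pi / 4)) / 2) • (1 : Matrix (QVec n) (QVec n) ℂ) +
    ((1 - Complex.exp (Complex.I * Real.pi / 4)) / 2) • P

lemma dotN_comm {n : ℕ} (a b : QVec n) : dotN a b = dotN b a := by
  simp [dotN, mul_comm]

lemma neg_one_pow_congr_C {m k : ℕ} (h : m % 2 = k % 2) : ((-1:ℂ))^m = (-1)^k := by
  conv_lhs => rw [← Nat.div_add_mod m 2]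
  conv_rhs => rw [← Nat.div_add_mod k 2]
  rw [pow_add, pow_add, pow_mul, pow_mul, h]
  norm_num

lemma dotN_add_right {n : ℕ} (a b c : QVec n) :
    dotN a (b + c) % 2 = (dotN a b + dotN a c) % 2 := by
  unfold dotN
  rw [← Finset.sum_add_distrib, Finset.sum_nat_mod, Finset.sum_nat_mod (f := fun i => (a i).val * (b i).val + (a i).val * (c i).val)]
  congr 1
  apply Finset.sum_congr rfl
  intro i _
  have : ((b + c) i).val = ((b i).val + (c i).val) % 2 := by
    simp [ZMod.val_add]
  rw [this, ← mul_add]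
  exact Nat.ModEq.mul_left _ (Nat.mod_modEq _ 2)

lemma neg_one_dotN_add {n : ℕ} (a b c : QVec n) :
    ((-1:ℂ))^(dotN a (b + c)) = (-1)^(dotN a b) * (-1)^(dotN a c) := by
  rw [← pow_add]
  exact neg_one_pow_congr_C (dotN_add_right a b c)

lemma neg_one_dotN_add' {n : ℕ} (a b c : QVec n) :
    ((-1:ℂ))^(dotN (a + b) c) = (-1)^(dotN a c) * (-1)^(dotN b c) := by
  rw [dotN_comm, neg_one_dotN_add, dotN_comm c a, dotN_comm c b]

lemma qvec_add_self {n : ℕ} (a : QVec n) : a + a = 0 := by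
  funext i
  show a i + a i = 0
  exact CharTwo.add_self_eq_zero _

/-- The scalar phase in the Pauli product formula. -/
noncomputable def zeta {n : ℕ} (a b c d : QVec n) : ℂ :=
  Complex.I ^ dotN a b * (-1:ℂ) ^ dotN b c * Complex.I ^ dotN c d *
    (Complex.I ^ dotN (a + c) (b + d))⁻¹

lemma pauli_mul {n : ℕ} (a b c d : QVec n) :
    Pauli a b * Pauli c d = zeta a b c d • Pauli (a + c) (b + d) := by
  funext x y
  simp only [Matrix.mul_apply, Pauli, Matrix.smul_apply, smul_eq_mul]
  rw [Finset.sum_eq_single (y + c)]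
  · by_cases h : x = y + c + a
    · have h2 : x = y + (a + c) := by rw [h]; abel
      rw [if_pos h, if_pos rfl, if_pos h2]
      have hI : Complex.I ^ dotN (a+c) (b+d) ≠ 0 := pow_ne_zero _ Complex.I_ne_zero
      unfold zeta
      field_simp [zeta]
      rw [neg_one_dotN_add b y c, neg_one_dotN_add' b d y]
      ring
    · have h2 : ¬ x = y + (a + c) := by rw [show y + (a+c) = y + c + a by abel]; exact h
      rw [if_neg h2]
      rw [if_neg h, mul_zero, zero_mul]
  · intro z _ hz
    rw [if_neg hz, mul_zero]
  · simp

lemma dotN_zero_left {n : ℕ} (b : QVec n) : dotN 0 b = 0 := by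
  simp [dotN]

lemma dotN_zero_right {n : ℕ} (b : QVec n) : dotN b 0 = 0 := by
  rw [dotN_comm]; exact dotN_zero_left b

lemma pauli_zero {n : ℕ} : Pauli (0 : QVec n) 0 = 1 := by
  funext x y
  simp only [Pauli, add_zero, dotN_zero_left, dotN_zero_right, pow_zero, one_mul]
  by_cases h : x = y <;> simp [h, Matrix.one_apply, eq_comm]

lemma zeta_self {n : ℕ} (a b : QVec n) : zeta a b a b = 1 := by
  unfold zeta
  rw [qvec_add_self, dotN_zero_left, pow_zero, inv_one, mul_one]
  rw [show Complex.I ^ dotN a b * (-1:ℂ) ^ dotN b a * Complex.I ^ dotN a b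
      = ((Complex.I ^ 2) ^ dotN a b) * (-1:ℂ) ^ dotN b a by ring]
  rw [Complex.I_sq, dotN_comm b a, ← pow_add, ← two_mul]
  exact (neg_one_pow_congr_C (by omega)).trans (pow_zero _)

lemma pauli_sq {n : ℕ} (a b : QVec n) : Pauli a b * Pauli a b = 1 := by
  rw [pauli_mul, zeta_self, qvec_add_self, qvec_add_self, pauli_zero, one_smul]

lemma pauli_herm {n : ℕ} (a b : QVec n) : (Pauli a b)ᴴ = Pauli a b := by
  funext x y
  simp only [Matrix.conjTranspose_apply, Pauli]
  have hiff : y = x + a ↔ x = y + a := by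
    constructor <;> intro h <;> rw [h] <;> rw [add_assoc, qvec_add_self, add_zero]
  by_cases h : x = y + a
  · rw [if_pos h, if_pos (hiff.mpr h)]
    have hx : (-1:ℂ) ^ dotN b x = (-1:ℂ) ^ dotN b y * (-1:ℂ) ^ dotN b a := by
      rw [h, neg_one_dotN_add]
    have hc1 : (star (-1 : ℂ)) = -1 := by simp
    simp only [star_mul', star_pow, hc1, Complex.star_def, Complex.conj_I]
    rw [hx, show (-Complex.I) ^ dotN a b = (-1:ℂ)^ dotN a b * Complex.I ^ dotN a b by rw [neg_pow]]
    rw [dotN_comm b a]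
    ring_nf
    rw [pow_mul]
    norm_num
    rcases Nat.even_or_odd (dotN a b) with he | ho
    · exact Or.inl (Even.neg_one_pow he)
    · exact Or.inr (Odd.neg_one_pow ho)
  · rw [if_neg h, if_neg (fun hy => h (hiff.mp hy)), star_zero]

lemma card_qvec (n : ℕ) : Fintype.card (QVec n) = 2 ^ n := by
  simp [Fintype.card_fun]

lemma char_sum {n : ℕ} (b : QVec n) :
    (∑ x : QVec n, ((-1:ℂ))^(dotN b x)) = if b = 0 then (2^n : ℂ) else 0 := by
  by_cases hb : b = 0
  · simp [hb, dotN_zero_left, card_qvec]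
  · rw [if_neg hb]
    obtain ⟨i0, hi0⟩ : ∃ i, b i ≠ 0 := by
      by_contra h
      push_neg at h
      exact hb (funext fun i => h i)
    have hb1 : b i0 = 1 := by
      have : ∀ x : ZMod 2, x ≠ 0 → x = 1 := by decide
      exact this _ hi0
    set δ : QVec n := fun j => if j = i0 then 1 else 0 with hδ
    have hdot : dotN b δ = 1 := by
      unfold dotN
      rw [Finset.sum_eq_single i0]
      · simp [hδ, hb1]
        rfl
      · intro j _ hj
        simp [hδ, hj]
      · simp
    have key : ∀ x : QVec n, ((-1:ℂ))^(dotN b (x + δ)) = -((-1:ℂ))^(dotN b x) := by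
      intro x
      rw [neg_one_dotN_add, hdot, pow_one]
      ring
    have hsum : (∑ x : QVec n, ((-1:ℂ))^(dotN b x))
        = ∑ x : QVec n, ((-1:ℂ))^(dotN b (x + δ)) :=
      (Fintype.sum_equiv (Equiv.addRight δ) _ _ (fun x => rfl)).symm
    have h2 : (∑ x : QVec n, ((-1:ℂ))^(dotN b x))
        = -∑ x : QVec n, ((-1:ℂ))^(dotN b x) := by
      conv_lhs => rw [hsum]
      simp only [key]
      rw [Finset.sum_neg_distrib]
    have := add_eq_zero_iff_eq_neg.mpr h2
    linear_combination this / 2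

lemma trace_pauli {n : ℕ} (a b : QVec n) :
    Matrix.trace (Pauli a b) = if a = 0 ∧ b = 0 then (2^n : ℂ) else 0 := by
  unfold Matrix.trace Pauli
  simp only [Matrix.diag]
  by_cases ha : a = 0
  · subst ha
    simp only [add_zero, if_pos rfl, dotN_zero_left, pow_zero, one_mul, true_and]
    exact char_sum b
  · rw [if_neg (fun h => ha h.1)]
    apply Finset.sum_eq_zero
    intro x _
    rw [if_neg]
    intro h
    exact ha (by have := h; nth_rewrite 1 [show x = x + 0 by rw [add_zero]] at this; exact (add_left_cancel this).symm)

lemma trace_pauli_mul {n : ℕ} (a b c d : QVec n) :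
    Matrix.trace (Pauli a b * Pauli c d) = if a = c ∧ b = d then (2^n : ℂ) else 0 := by
  by_cases h : a = c ∧ b = d
  · obtain ⟨h1, h2⟩ := h
    subst h1; subst h2
    rw [pauli_sq, Matrix.trace_one, card_qvec, if_pos ⟨rfl, rfl⟩]
    norm_num
  · rw [if_neg h, pauli_mul, Matrix.trace_smul, trace_pauli, smul_eq_mul]
    rw [if_neg, mul_zero]
    rintro ⟨h1, h2⟩
    apply h
    constructor
    · have : a + c + c = c := by rw [h1, zero_add]
      rwa [add_assoc, qvec_add_self, add_zero] at this
    · have : b + d + d = d := by rw [h2, zero_add]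
      rwa [add_assoc, qvec_add_self, add_zero] at this

lemma neg_one_pow_mul_self (m : ℕ) : ((-1:ℂ))^m * (-1)^m = 1 := by
  rw [← pow_add]
  exact (neg_one_pow_congr_C (by omega)).trans (pow_zero _)

lemma pauli_comm_sign {n : ℕ} (a b c d : QVec n) :
    Pauli a b * Pauli c d
      = (((-1:ℂ))^(dotN b c) * ((-1:ℂ))^(dotN d a)) • (Pauli c d * Pauli a b) := by
  rw [pauli_mul, pauli_mul, smul_smul, add_comm c a, add_comm d b]
  congr 1
  unfold zeta
  rw [add_comm c a, add_comm d b]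
  have h : ((-1:ℂ))^(dotN d a * 2) = 1 := by
    rw [pow_mul, sq]; exact neg_one_pow_mul_self _
  linear_combination (-1 * ((-1:ℂ)^(dotN b c) * Complex.I^(dotN c d) * Complex.I^(dotN a b)
    * (Complex.I⁻¹ ^ dotN (a+c) (b+d)))) * h

lemma zeta_unit {n : ℕ} (a b c d : QVec n) : zeta a b c d * (starRingEnd ℂ) (zeta a b c d) = 1 := by
  have habs : ‖zeta a b c d‖ = 1 := by
    unfold zeta
    simp [norm_mul, norm_pow, norm_inv, Complex.norm_I]
  rw [Complex.mul_conj, ← Complex.sq_norm, habs]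
  norm_num

lemma conj_zeta {n : ℕ} (a b c d : QVec n) :
    (starRingEnd ℂ) (zeta a b c d)
      = ((-1:ℂ))^(dotN a b + dotN c d + dotN (a+c) (b+d)) * zeta a b c d := by
  unfold zeta
  have hc1 : (starRingEnd ℂ) (-1:ℂ) = -1 := by simp
  simp only [_root_.map_mul, map_pow, map_inv₀, Complex.conj_I, hc1, pow_add]
  rw [show ((-Complex.I) : ℂ) = (-1) * Complex.I by ring]
  rw [mul_pow, mul_pow, mul_pow, mul_inv]
  have h1 : ∀ m : ℕ, (((-1:ℂ))^m)⁻¹ = (-1:ℂ)^m := by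
    intro m
    rcases Nat.even_or_odd m with he | ho
    · rw [Even.neg_one_pow he]; norm_num
    · rw [Odd.neg_one_pow ho]; norm_num
  rw [h1]
  ring

noncomputable def omg : ℂ := Complex.exp (Complex.I * (Real.pi : ℂ) / 4)

lemma conj_omg : (starRingEnd ℂ) omg = Complex.exp (-(Complex.I * (Real.pi : ℂ) / 4)) := by
  unfold omg
  rw [← Complex.exp_conj]
  congr 1
  simp [map_div₀, _root_.map_mul, Complex.conj_I, Complex.conj_ofReal, map_ofNat]
  ring

lemma omg_mul_conj : omg * (starRingEnd ℂ) omg = 1 := by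
  rw [conj_omg, omg, ← Complex.exp_add]
  simp

lemma omg_cos_sin : omg = ((Real.sqrt 2 / 2 : ℝ) : ℂ) + ((Real.sqrt 2 / 2 : ℝ) : ℂ) * Complex.I := by
  rw [omg, show Complex.I * (Real.pi : ℂ) / 4 = ((Real.pi / 4 : ℝ) : ℂ) * Complex.I by push_cast; ring]
  rw [Complex.exp_mul_I, ← Complex.ofReal_cos, ← Complex.ofReal_sin,
    Real.cos_pi_div_four, Real.sin_pi_div_four]

lemma conj_omg' : (starRingEnd ℂ) omg
    = ((Real.sqrt 2 / 2 : ℝ) : ℂ) - ((Real.sqrt 2 / 2 : ℝ) : ℂ) * Complex.I := by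
  rw [omg_cos_sin]
  simp only [map_add, _root_.map_mul, Complex.conj_ofReal, Complex.conj_I]
  ring

lemma omg_add_conj : omg + (starRingEnd ℂ) omg = ((Real.sqrt 2 : ℝ) : ℂ) := by
  rw [conj_omg', omg_cos_sin]
  push_cast
  ring

lemma omg_sub_conj : omg - (starRingEnd ℂ) omg = Complex.I * ((Real.sqrt 2 : ℝ) : ℂ) := by
  rw [conj_omg', omg_cos_sin]
  push_cast
  ring

lemma expand_trace {n : ℕ} (P R Q : Matrix (QVec n) (QVec n) ℂ) (α β γ δ : ℂ)
    (hP2 : P * P = 1) (u : ℂ) (huu : u * u = 1) (hPQ : P * Q = u • (Q * P)) :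
    Matrix.trace (R * (α • (1 : Matrix (QVec n) (QVec n) ℂ) + β • P) * Q * (γ • 1 + δ • P))
      = (α * γ + u * (β * δ)) * Matrix.trace (R * Q)
        + (β * γ + u * (α * δ)) * Matrix.trace (R * P * Q) := by
  have hQP : Q * P = u • (P * Q) := by
    rw [hPQ, smul_smul, huu, one_smul]
  have hRQP : R * Q * P = u • (R * (P * Q)) := by
    rw [mul_assoc, hQP, Matrix.mul_smul]
  have hRPQP : R * P * Q * P = u • (R * Q) := by
    rw [mul_assoc (R * P), hQP, Matrix.mul_smul, ← mul_assoc,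
      show R * P * P = R by rw [mul_assoc, hP2, mul_one]]
  simp only [Matrix.mul_add, Matrix.add_mul, Matrix.mul_smul, Matrix.smul_mul,
    Matrix.mul_one, Matrix.trace_add, Matrix.trace_smul, smul_eq_mul]
  rw [hRQP, hRPQP]
  simp only [Matrix.trace_smul, smul_eq_mul, mul_assoc R P Q]
  ring


/-- For every non-identity Pauli matrix `P`, every entry of the channel representation
of `R(P)` lies in `{0, 1, 1/√2, −1/√2}`. -/
theorem chan_Rgate_entries (n : ℕ) (a b : QVec n) (hP : Pauli a b ≠ 1)
    (r s : QVec n × QVec n) :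
    chan (Rgate (Pauli a b)) r s ∈
      ({0, 1, ((Real.sqrt 2 : ℝ) : ℂ)⁻¹, -((Real.sqrt 2 : ℝ) : ℂ)⁻¹} : Set ℂ) := by
  have hab : ¬ (a = 0 ∧ b = 0) := by
    rintro ⟨rfl, rfl⟩
    exact hP pauli_zero
  set α : ℂ := (1 + omg) / 2 with hα
  set β : ℂ := (1 - omg) / 2 with hβ
  have hcα : (starRingEnd ℂ) α = (1 + (starRingEnd ℂ) omg) / 2 := by
    rw [hα, map_div₀, map_add, _root_.map_one, map_ofNat]
  have hcβ : (starRingEnd ℂ) β = (1 - (starRingEnd ℂ) omg) / 2 := by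
    rw [hβ, map_div₀, map_sub, _root_.map_one, map_ofNat]
  have hU : Rgate (Pauli a b) = α • (1 : Matrix (QVec n) (QVec n) ℂ) + β • Pauli a b := rfl
  have hUH : (Rgate (Pauli a b))ᴴ
      = (starRingEnd ℂ) α • (1 : Matrix (QVec n) (QVec n) ℂ)
        + (starRingEnd ℂ) β • Pauli a b := by
    rw [hU, Matrix.conjTranspose_add, Matrix.conjTranspose_smul, Matrix.conjTranspose_smul,
      Matrix.conjTranspose_one, pauli_herm]
    rfl
  set u : ℂ := ((-1:ℂ))^(dotN b s.1) * ((-1:ℂ))^(dotN s.2 a) with hu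
  have huu : u * u = 1 := by
    rw [hu, mul_mul_mul_comm, neg_one_pow_mul_self, neg_one_pow_mul_self, mul_one]
  have hPQ : Pauli a b * Pauli s.1 s.2 = u • (Pauli s.1 s.2 * Pauli a b) :=
    pauli_comm_sign a b s.1 s.2
  have hexp := expand_trace (Pauli a b) (Pauli r.1 r.2) (Pauli s.1 s.2)
    α β ((starRingEnd ℂ) α) ((starRingEnd ℂ) β) (pauli_sq a b) u huu hPQ
  have hT1 : Matrix.trace (Pauli r.1 r.2 * Pauli s.1 s.2)
      = if r = s then (2^n : ℂ) else 0 := by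
    rw [trace_pauli_mul]
    congr 1
    simp [Prod.ext_iff]
  have hT3 : Matrix.trace (Pauli r.1 r.2 * Pauli a b * Pauli s.1 s.2)
      = zeta r.1 r.2 a b * (if r.1 + a = s.1 ∧ r.2 + b = s.2 then (2^n : ℂ) else 0) := by
    rw [pauli_mul r.1 r.2 a b, Matrix.smul_mul, Matrix.trace_smul, smul_eq_mul,
      trace_pauli_mul]
  have hchan : chan (Rgate (Pauli a b)) r s
      = ((1 : ℂ) / 2 ^ n) *
        ((α * (starRingEnd ℂ) α + u * (β * (starRingEnd ℂ) β)) * (if r = s then (2^n : ℂ) else 0)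
          + (β * (starRingEnd ℂ) α + u * (α * (starRingEnd ℂ) β)) *
            (zeta r.1 r.2 a b * (if r.1 + a = s.1 ∧ r.2 + b = s.2 then (2^n : ℂ) else 0))) := by
    unfold chan
    rw [hUH]
    conv_lhs => rw [hU]
    rw [hexp, hT1, hT3]
  simp only [Set.mem_insert_iff, Set.mem_singleton_iff]
  have h2n : ((2:ℂ))^n ≠ 0 := pow_ne_zero _ two_ne_zero
  have hs2 : ((Real.sqrt 2 : ℝ) : ℂ) * ((Real.sqrt 2 : ℝ) : ℂ) = 2 := by
    rw [← Complex.ofReal_mul, Real.mul_self_sqrt (by norm_num)]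
    norm_num
  have hs0 : ((Real.sqrt 2 : ℝ) : ℂ) ≠ 0 := by
    intro h
    rw [h, mul_zero] at hs2
    norm_num at hs2
  rcases Nat.even_or_odd (dotN b s.1 + dotN s.2 a) with hev | hod
  · have hu1 : u = 1 := by rw [hu, ← pow_add]; exact Even.neg_one_pow hev
    have hc1 : α * (starRingEnd ℂ) α + u * (β * (starRingEnd ℂ) β) = 1 := by
      rw [hu1, one_mul, hα, hβ, hcα, hcβ]
      linear_combination omg_mul_conj / 2
    have hc2 : β * (starRingEnd ℂ) α + u * (α * (starRingEnd ℂ) β) = 0 := by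
      rw [hu1, one_mul, hα, hβ, hcα, hcβ]
      linear_combination (-(1:ℂ)/2) * omg_mul_conj
    rw [hchan, hc1, hc2]
    by_cases hrs : r = s
    · rw [if_pos hrs]
      right; left
      field_simp
      simp
    · rw [if_neg hrs]
      left
      ring
  · have hu1 : u = -1 := by rw [hu, ← pow_add]; exact Odd.neg_one_pow hod
    have hc1 : α * (starRingEnd ℂ) α + u * (β * (starRingEnd ℂ) β)
        = ((Real.sqrt 2 : ℝ) : ℂ) / 2 := by
      rw [hu1, hα, hβ, hcα, hcβ]
      linear_combination omg_add_conj / 2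
    have hc2 : β * (starRingEnd ℂ) α + u * (α * (starRingEnd ℂ) β)
        = -(Complex.I * ((Real.sqrt 2 : ℝ) : ℂ)) / 2 := by
      rw [hu1, hα, hβ, hcα, hcβ]
      linear_combination (-(1:ℂ)/2) * omg_sub_conj
    by_cases hrs : r = s
    · have hcond : ¬(r.1 + a = s.1 ∧ r.2 + b = s.2) := by
        rintro ⟨h1, h2⟩
        apply hab
        rw [← hrs] at h1 h2
        exact ⟨add_eq_left.mp h1, add_eq_left.mp h2⟩
      rw [hchan, hc1, hc2, if_pos hrs, if_neg hcond]
      right; right; left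
      rw [mul_zero, mul_zero, add_zero]
      field_simp
      linear_combination hs2
    · by_cases hcond : r.1 + a = s.1 ∧ r.2 + b = s.2
      · obtain ⟨h1, h2⟩ := hcond
        have hr1 : r.1 = s.1 + a := by rw [← h1, add_assoc, qvec_add_self, add_zero]
        have hr2 : r.2 = s.2 + b := by rw [← h2, add_assoc, qvec_add_self, add_zero]
        have hu1' : ((-1:ℂ))^(dotN s.1 b) * ((-1:ℂ))^(dotN a s.2) = -1 := by
          rw [dotN_comm s.1 b, dotN_comm a s.2, ← hu]
          exact hu1
        have hsgn : ((-1:ℂ))^(dotN r.1 r.2 + dotN a b + dotN (r.1+a) (r.2+b)) = -1 := by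
          rw [pow_add, pow_add, hr1, hr2]
          rw [add_assoc s.1 a a, add_assoc s.2 b b, qvec_add_self, qvec_add_self,
            add_zero, add_zero]
          rw [neg_one_dotN_add' s.1 a (s.2 + b), neg_one_dotN_add s.1 s.2 b,
            neg_one_dotN_add a s.2 b]
          have hX := neg_one_pow_mul_self (dotN s.1 s.2)
          have hY := neg_one_pow_mul_self (dotN a b)
          linear_combination (((-1:ℂ))^(dotN a b) * ((-1:ℂ))^(dotN a b)
              * ((-1:ℂ))^(dotN s.1 b) * ((-1:ℂ))^(dotN a s.2)) * hX
            + (((-1:ℂ))^(dotN s.1 b) * ((-1:ℂ))^(dotN a s.2)) * hY + hu1'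
        have hE : (starRingEnd ℂ) (zeta r.1 r.2 a b) = - zeta r.1 r.2 a b := by
          rw [conj_zeta, hsgn]
          ring
        have hz2 : zeta r.1 r.2 a b * zeta r.1 r.2 a b = -1 := by
          have hzu := zeta_unit r.1 r.2 a b
          rw [hE] at hzu
          linear_combination -hzu
        have hz : zeta r.1 r.2 a b = Complex.I ∨ zeta r.1 r.2 a b = -Complex.I := by
          have hfac : (zeta r.1 r.2 a b - Complex.I) * (zeta r.1 r.2 a b + Complex.I) = 0 := by
            linear_combination hz2 - Complex.I_sq
          rcases mul_eq_zero.mp hfac with h | h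
          · exact Or.inl (by linear_combination h)
          · exact Or.inr (by linear_combination h)
        rw [hchan, hc1, hc2, if_neg hrs, if_pos ⟨h1, h2⟩]
        rcases hz with hz | hz <;> rw [hz]
        · right; right; left
          rw [mul_zero, zero_add]
          field_simp
          linear_combination hs2
            + (-((Real.sqrt 2 : ℝ) : ℂ)^2) * Complex.I_sq
        · right; right; right
          rw [mul_zero, zero_add]
          field_simp
          linear_combination (-1:ℂ) * hs2
            + (((Real.sqrt 2 : ℝ) : ℂ)^2) * Complex.I_sq
      · rw [hchan, if_neg hrs, if_neg hcond]
        left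
        ring
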